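/- arXiv:2401.09887 — 5 statements merged into one kernel-verified Lean document; each statement's English description precedes it below -/
import Mathlib

section
/- Let L be a complete lattice with J ⊆ L completely join-generating and M ⊆ L completely meet-generating, and let ◇ : L → L be completely join-preserving. Then (∀ a ∈ L, ◇ (◇ a) ≤ ◇ a) if and only if (∀ j ∈ J, ∀ m ∈ M, ◇ j ≤ m → ◇ (◇ j) ≤ m). -/
/-! Since `d` preserves joins, `d (d a)` is the join of the `d (d j)` over generators `j ≤ a`, so it
suffices that each `d (d j) ≤ d a`; this is tested against the meet generators `m ≥ d a`, for which
`d j ≤ d a ≤ m` by monotonicity of `d`. -/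

section CompleteLattice

variable {L : Type*} [CompleteLattice L]

def CompletelyJoinGenerating (J : Set L) : Prop :=
  ∀ u : L, u = sSup {j ∈ J | j ≤ u}

def CompletelyMeetGenerating (M : Set L) : Prop :=
  ∀ u : L, u = sInf {m ∈ M | u ≤ m}

theorem CompletelyMeetGenerating.le_of_forall_le_imp_le {M : Set L}
    (hM : CompletelyMeetGenerating M) {a b : L} (h : ∀ m ∈ M, b ≤ m → a ≤ m) : a ≤ b := by
  rw [hM b]
  exact le_sInf fun m ⟨hmM, hbm⟩ => h m hmM hbm

theorem monotone_of_map_sSup {K : Type*} [CompleteLattice K] {d : L → K}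
    (hd : ∀ S : Set L, d (sSup S) = sSup (d '' S)) : Monotone d := by
  intro a b hab
  have h := hd {a, b}
  rw [sSup_pair, Set.image_pair, sSup_pair, sup_eq_right.mpr hab] at h
  exact h ▸ le_sup_left

theorem map_map_le_of_joinGenerating {J : Set L} (hJ : CompletelyJoinGenerating J) {d : L → L}
    (hd : ∀ S : Set L, d (sSup S) = sSup (d '' S)) (a : L)
    (h : ∀ j ∈ J, j ≤ a → d (d j) ≤ d a) : d (d a) ≤ d a := by
  have hda : d a = sSup (d '' {j ∈ J | j ≤ a}) := by rw [← hd, ← hJ a]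
  calc d (d a) = sSup ((d ∘ d) '' {j ∈ J | j ≤ a}) := by
        conv_lhs => rw [hda, hd, Set.image_image]
        rfl
    _ ≤ d a := sSup_le <| Set.forall_mem_image.mpr fun j ⟨hjJ, hja⟩ => h j hjJ hja

end CompleteLattice

theorem alba_correspondence_axiom_4
    {L : Type*} [CompleteLattice L] (J M : Set L)
    (hJ : ∀ u : L, u = sSup {j ∈ J | j ≤ u})
    (hM : ∀ u : L, u = sInf {m ∈ M | u ≤ m})
    (d : L → L) (hd : ∀ S : Set L, d (sSup S) = sSup (d '' S)) :
    (∀ a : L, d (d a) ≤ d a) ↔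
      (∀ j ∈ J, ∀ m ∈ M, d j ≤ m → d (d j) ≤ m) := by
  have hmono : Monotone d := monotone_of_map_sSup hd
  refine ⟨fun h j _ m _ hjm => (h j).trans hjm, fun h a => ?_⟩
  refine map_map_le_of_joinGenerating hJ hd a fun j hjJ hja => ?_
  exact CompletelyMeetGenerating.le_of_forall_le_imp_le hM fun m hmM hdam =>
    h j hjJ m hmM ((hmono hja).trans hdam)
end

section
/- Let L be a complete lattice with J ⊆ L completely join-generating and M ⊆ L completely meet-generating, and let □ : L → L be monotone. Then (∀ a ∈ L, □ a ≤ a) if and only if (∀ j ∈ J, ∀ m ∈ M, j ≤ □ m → j ≤ m). -/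
section Generation

variable {L : Type*} [CompleteLattice L]

def CompletelyJoinGenerates (J : Set L) : Prop :=
  ∀ u : L, u = sSup {j ∈ J | j ≤ u}

def CompletelyMeetGenerates (M : Set L) : Prop :=
  ∀ u : L, u = sInf {m ∈ M | u ≤ m}

theorem CompletelyJoinGenerates.le_iff {J : Set L} (hJ : CompletelyJoinGenerates J) {u v : L} :
    u ≤ v ↔ ∀ j ∈ J, j ≤ u → j ≤ v :=
  ⟨fun huv _ _ hju => hju.trans huv,
    fun h => (hJ u).trans_le (sSup_le fun j hj => h j hj.1 hj.2)⟩

theorem CompletelyMeetGenerates.le_iff {M : Set L} (hM : CompletelyMeetGenerates M) {u v : L} :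
    u ≤ v ↔ ∀ m ∈ M, v ≤ m → u ≤ m :=
  ⟨fun huv _ _ hvm => huv.trans hvm,
    fun h => (le_sInf fun m hm => h m hm.1 hm.2).trans_eq (hM v).symm⟩

end Generation

/-- `b a ≤ a` is tested against every `m ∈ M` above `a`, and `b a ≤ m` against every `j ∈ J`
below `b a`; monotonicity then turns `j ≤ b a` into `j ≤ b m`. -/
theorem alba_correspondence_axiom_T
    {L : Type*} [CompleteLattice L] (J M : Set L)
    (hJ : ∀ u : L, u = sSup {j ∈ J | j ≤ u})
    (hM : ∀ u : L, u = sInf {m ∈ M | u ≤ m})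
    (b : L → L) (hb : Monotone b) :
    (∀ a : L, b a ≤ a) ↔ (∀ j ∈ J, ∀ m ∈ M, j ≤ b m → j ≤ m) := by
  refine ⟨fun hT j _ m _ hjm => hjm.trans (hT m), fun h a => ?_⟩
  refine (CompletelyMeetGenerates.le_iff hM).2 fun m hmM ham => ?_
  have hbam : b a ≤ b m := hb ham
  exact (CompletelyJoinGenerates.le_iff hJ).2 fun j hjJ hjba => h j hjJ m hmM (hjba.trans hbam)
end

section
/- Let L be a complete lattice with J ⊆ L completely join-generating and M ⊆ L completely meet-generating, let ◇ : L → L be completely join-preserving with right adjoint ■, and □ : L → L completely meet-preserving. Then (∀ a ∈ L, a ≤ □ (◇ a)) if and only if (∀ j ∈ J, ∀ m ∈ M, ◇ j ≤ m → j ≤ □ m). -/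
/-! Writing `a` as the join of the `j ∈ J` below it and `◇ a` as the meet of the `m ∈ M` above it,
`a ≤ □ (◇ a)` reduces, since `□` preserves meets, to `j ≤ □ m` for all such `j` and `m`; these
satisfy `◇ j ≤ ◇ a ≤ m`. Conversely `j ≤ □ (◇ j) ≤ □ m` by monotonicity of `□`. -/

section CompleteLattice

variable {α β : Type*} [CompleteLattice α] [CompleteLattice β]

theorem monotone_of_map_sSup_s6 {f : α → β} (hf : ∀ s : Set α, f (sSup s) = sSup (f '' s)) :
    Monotone f :=
  OrderHomClass.mono (⟨f, hf⟩ : sSupHom α β)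

theorem monotone_of_map_sInf {f : α → β} (hf : ∀ s : Set α, f (sInf s) = sInf (f '' s)) :
    Monotone f :=
  OrderHomClass.mono (⟨f, hf⟩ : sInfHom α β)

theorem le_of_forall_mem_le_imp_le {J : Set α} (hJ : ∀ u : α, u = sSup {j ∈ J | j ≤ u})
    {u v : α} (h : ∀ j ∈ J, j ≤ u → j ≤ v) : u ≤ v := by
  rw [hJ u]
  exact sSup_le fun j ⟨hjJ, hju⟩ => h j hjJ hju

theorem le_map_of_forall_mem_le_imp_le {M : Set α} (hM : ∀ u : α, u = sInf {m ∈ M | u ≤ m})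
    {f : α → β} (hf : ∀ s : Set α, f (sInf s) = sInf (f '' s)) {x : β} {u : α}
    (h : ∀ m ∈ M, u ≤ m → x ≤ f m) : x ≤ f u := by
  rw [hM u, hf]
  exact le_sInf <| Set.forall_mem_image.2 fun m ⟨hmM, hum⟩ => h m hmM hum

end CompleteLattice

theorem alba_correspondence_axiom_B_general
    {L : Type*} [CompleteLattice L] (J M : Set L)
    (hJ : ∀ u : L, u = sSup {j ∈ J | j ≤ u})
    (hM : ∀ u : L, u = sInf {m ∈ M | u ≤ m})
    (d b : L → L)
    (hd : ∀ S : Set L, d (sSup S) = sSup (d '' S))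
    (hb : ∀ S : Set L, b (sInf S) = sInf (b '' S)) :
    (∀ a : L, a ≤ b (d a)) ↔ (∀ j ∈ J, ∀ m ∈ M, d j ≤ m → j ≤ b m) := by
  have hd_mono := monotone_of_map_sSup_s6 hd
  have hb_mono := monotone_of_map_sInf hb
  constructor
  · intro h j _ m _ hdjm
    exact (h j).trans (hb_mono hdjm)
  · intro h a
    refine le_of_forall_mem_le_imp_le hJ fun j hjJ hja => ?_
    exact le_map_of_forall_mem_le_imp_le hM hb fun m hmM hdam =>
      h j hjJ m hmM ((hd_mono hja).trans hdam)

theorem alba_correspondence_axiom_B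
    {L : Type*} [CompleteLattice L] (J M : Set L)
    (hJ : ∀ u : L, u = sSup {j ∈ J | j ≤ u})
    (hM : ∀ u : L, u = sInf {m ∈ M | u ≤ m})
    (d bs b : L → L)
    (hd : ∀ S : Set L, d (sSup S) = sSup (d '' S))
    (hadj : ∀ u v : L, d u ≤ v ↔ u ≤ bs v)
    (hb : ∀ S : Set L, b (sInf S) = sInf (b '' S)) :
    (∀ a : L, a ≤ b (d a)) ↔ (∀ j ∈ J, ∀ m ∈ M, d j ≤ m → j ≤ b m) :=
  alba_correspondence_axiom_B_general J M hJ hM d b hd hb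
end

section
/- Let L be a lattice that is a compact sublattice of a complete lattice L', and let f : L → L be finitely join-preserving (f ⊥ = ⊥ and f (x ⊔ y) = f x ⊔ f y). Define f^σ on closed elements k (meets of subsets of L) by f^σ k = ⨅ { f a | a ∈ L, k ≤ a }. Then f^σ is monotone on closed elements and agrees with f on L, i.e., f^σ a = f a for all a ∈ L. -/
open Set

theorem monotoneOn_of_map_sup {α β : Type*} [SemilatticeSup α] [SemilatticeSup β]
    {K : Set α} {f : α → β} (hf : ∀ x ∈ K, ∀ y ∈ K, f (x ⊔ y) = f x ⊔ f y) :
    MonotoneOn f K := by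
  intro a ha b hb hab
  calc f a ≤ f a ⊔ f b := le_sup_left
    _ = f (a ⊔ b) := (hf a ha b hb).symm
    _ = f b := by rw [sup_eq_right.2 hab]

def sigmaExtension {α β : Type*} [Preorder α] [CompleteLattice β] (K : Set α) (f : α → β)
    (k : α) : β :=
  sInf (f '' {a ∈ K | k ≤ a})

section

variable {α β : Type*} [Preorder α] [CompleteLattice β] {K : Set α} {f : α → β}

theorem sigmaExtension_mono : Monotone (sigmaExtension K f) :=
  fun _ _ hle => sInf_le_sInf <| image_mono fun _ ha => ⟨ha.1, hle.trans ha.2⟩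

theorem sigmaExtension_eq_of_mem (hf : MonotoneOn f K) {a : α} (ha : a ∈ K) :
    sigmaExtension K f a = f a := by
  have hleast : IsLeast {b ∈ K | a ≤ b} a := ⟨⟨ha, le_rfl⟩, fun _ hb => hb.2⟩
  exact ((hf.mono (sep_subset _ _)).map_isLeast hleast).isGLB.sInf_eq

end

theorem sigma_extension_monotone_and_extends_general
    {L' : Type*} [CompleteLattice L'] (K : Set L')
    (f : L' → L')
    (hf_sup : ∀ x ∈ K, ∀ y ∈ K, f (x ⊔ y) = f x ⊔ f y)
    -- the σ-extension on closed elements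
    (fσ : L' → L')
    (hfσ : ∀ k : L', fσ k = sInf (f '' {a ∈ K | k ≤ a})) :
    (∀ k₁ k₂ : L',
      (∃ S ⊆ K, k₁ = sInf S) → (∃ S ⊆ K, k₂ = sInf S) →
      k₁ ≤ k₂ → fσ k₁ ≤ fσ k₂) ∧
    (∀ a ∈ K, fσ a = f a) := by
  obtain rfl : fσ = sigmaExtension K f := funext hfσ
  exact ⟨fun _ _ _ _ hle => sigmaExtension_mono hle,
    fun _ ha => sigmaExtension_eq_of_mem (monotoneOn_of_map_sup hf_sup) ha⟩

theorem sigma_extension_monotone_and_extends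
    {L' : Type*} [CompleteLattice L'] (K : Set L')
    (hbot : ⊥ ∈ K)
    (hsup : ∀ x ∈ K, ∀ y ∈ K, x ⊔ y ∈ K)
    (hinf : ∀ x ∈ K, ∀ y ∈ K, x ⊓ y ∈ K)
    (hcompact : ∀ S T : Set L', S ⊆ K → T ⊆ K → sInf S ≤ sSup T →
      ∃ S' T' : Set L', S' ⊆ S ∧ T' ⊆ T ∧ S'.Finite ∧ T'.Finite ∧
        sInf S' ≤ sSup T')
    (f : L' → L')
    (hf_bot : f ⊥ = ⊥)
    (hf_sup : ∀ x ∈ K, ∀ y ∈ K, f (x ⊔ y) = f x ⊔ f y)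
    -- the σ-extension on closed elements
    (fσ : L' → L')
    (hfσ : ∀ k : L', fσ k = sInf (f '' {a ∈ K | k ≤ a})) :
    (∀ k₁ k₂ : L',
      (∃ S ⊆ K, k₁ = sInf S) → (∃ S ⊆ K, k₂ = sInf S) →
      k₁ ≤ k₂ → fσ k₁ ≤ fσ k₂) ∧
    (∀ a ∈ K, fσ a = f a) :=
  sigma_extension_monotone_and_extends_general K f hf_sup fσ hfσ
end

section
/- Let L be a lattice that is a dense and compact sublattice of a complete lattice L'. If f : L → L is finitely meet-preserving, then its π-extension, defined on open elements o by f^π o = ⨆ { f a | a ∈ L, a ≤ o } and on arbitrary u by f^π u = ⨅ { f^π o | o open, u ≤ o }, agrees with f on elements of L. -/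
/-! Preserving binary meets makes `f` monotone on `L`, so `f^π o ≥ f a` for every open `o ≥ a`,
with equality at `o = a`, which is itself open. -/

theorem monotoneOn_of_map_inf {α β : Type*} [SemilatticeInf α] [SemilatticeInf β]
    {K : Set α} {f : α → β} (hf : ∀ x ∈ K, ∀ y ∈ K, f (x ⊓ y) = f x ⊓ f y) :
    MonotoneOn f K := by
  intro x hx y hy hxy
  have h := hf x hx y hy
  rw [inf_eq_left.mpr hxy] at h
  exact left_eq_inf.mp h

theorem MonotoneOn.isGreatest_image_le {α β : Type*} [Preorder α] [Preorder β]
    {K : Set α} {f : α → β} (hf : MonotoneOn f K) {a : α} (ha : a ∈ K) :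
    IsGreatest (f '' {b ∈ K | b ≤ a}) (f a) :=
  ⟨⟨a, ⟨ha, le_rfl⟩, rfl⟩, by rintro _ ⟨b, ⟨hb, hba⟩, rfl⟩; exact hf hb ha hba⟩

theorem pi_extension_extends_general
    {L' : Type*} [CompleteLattice L'] (K : Set L')
    (f : L' → L')
    (hf_inf : ∀ x ∈ K, ∀ y ∈ K, f (x ⊓ y) = f x ⊓ f y)
    -- the π-extension: first on open elements, then on arbitrary elements
    (fπO fπ : L' → L')
    (hfπO : ∀ o : L', fπO o = sSup (f '' {a ∈ K | a ≤ o}))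
    (hfπ : ∀ u : L', fπ u = sInf (fπO '' {o | (∃ S ⊆ K, o = sSup S) ∧ u ≤ o})) :
    ∀ a ∈ K, fπ a = f a := by
  intro a ha
  have hopen : ∃ S ⊆ K, a = sSup S := ⟨{a}, Set.singleton_subset_iff.mpr ha, sSup_singleton.symm⟩
  have hfπO_self : fπO a = f a := by
    rw [hfπO]
    exact ((monotoneOn_of_map_inf hf_inf).isGreatest_image_le ha).csSup_eq
  rw [hfπ]
  refine IsLeast.csInf_eq ⟨⟨a, ⟨hopen, le_rfl⟩, hfπO_self⟩, ?_⟩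
  rintro _ ⟨o, ⟨-, hao⟩, rfl⟩
  rw [hfπO]
  exact le_sSup ⟨a, ⟨ha, hao⟩, rfl⟩

theorem pi_extension_extends
    {L' : Type*} [CompleteLattice L'] (K : Set L')
    (htop : ⊤ ∈ K)
    (hsup : ∀ x ∈ K, ∀ y ∈ K, x ⊔ y ∈ K)
    (hinf : ∀ x ∈ K, ∀ y ∈ K, x ⊓ y ∈ K)
    (hdense : ∀ u : L',
      (∃ F : Set L', (∀ x ∈ F, ∃ S ⊆ K, x = sInf S) ∧ u = sSup F) ∧
      (∃ G : Set L', (∀ x ∈ G, ∃ S ⊆ K, x = sSup S) ∧ u = sInf G))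
    (hcompact : ∀ S T : Set L', S ⊆ K → T ⊆ K → sInf S ≤ sSup T →
      ∃ S' T' : Set L', S' ⊆ S ∧ T' ⊆ T ∧ S'.Finite ∧ T'.Finite ∧
        sInf S' ≤ sSup T')
    (f : L' → L')
    (hf_top : f ⊤ = ⊤)
    (hf_inf : ∀ x ∈ K, ∀ y ∈ K, f (x ⊓ y) = f x ⊓ f y)
    -- the π-extension: first on open elements, then on arbitrary elements
    (fπO fπ : L' → L')
    (hfπO : ∀ o : L', fπO o = sSup (f '' {a ∈ K | a ≤ o}))
    (hfπ : ∀ u : L', fπ u = sInf (fπO '' {o | (∃ S ⊆ K, o = sSup S) ∧ u ≤ o})) :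
    ∀ a ∈ K, fπ a = f a :=
  pi_extension_extends_general K f hf_inf fπO fπ hfπO hfπ
end
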